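/- arXiv:2002.04009 — 3 statements merged into one kernel-verified Lean document; each statement's English description precedes it below -/
import Mathlib

section
/- In the chart (z, s₁) of the Nash modification of the Whitney umbrella, with g₁, g₂ as above, for every t ≠ 0, every square root s with s² = t and every u with u² = s (so that u⁴ = t), the points (z, s₁) = (s, ±2/u) are common zeros of g₁ and g₂; similarly (z, s₁) = (−s, ±2i/u) are common zeros. -/
set_option maxHeartbeats 2000000

/-- First component `g₁ = ⟨ν*df_t, v₁⟩` of the pullback of `df_t` to the Nash modification
of the Whitney umbrella, in the chart with coordinates `(z, s₁)`. -/
noncomputable def nashG1 (t z s1 : ℂ) : ℂ :=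
  (-s1) * (z ^ 2 - (1 / 2) * z ^ 2 * s1 ^ 2 + 2 * z - t)

/-- Second component `g₂ = ⟨ν*df_t, v₂⟩` of the pullback of `df_t` to the Nash modification
of the Whitney umbrella, in the chart with coordinates `(z, s₁)`. -/
noncomputable def nashG2 (t z s1 : ℂ) : ℂ :=
  (1 + (1 / 2) * z * s1 ^ 2) * ((1 / 2) * z ^ 2 * s1 ^ 2 - 2 * z) +
    t * ((1 / 2) * z * s1 ^ 2 - 2)

open Complex in
/-- For every `t ≠ 0` and every choice of square root `s` with `s^2 = t`
and fourth root `u` with `u^2 = s` (so `u^4 = t`), the points `(z, s1) = (s, ±2/u)` are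
common zeros of `g1` and `g2`; similarly `(z, s1) = (-s, ±2i/u)` are common zeros. -/
theorem branches_common_zeros :
    ∀ t s u : ℂ, t ≠ 0 → s ^ 2 = t → u ^ 2 = s →
      (nashG1 t s (2 / u) = 0 ∧ nashG2 t s (2 / u) = 0) ∧
      (nashG1 t s (-(2 / u)) = 0 ∧ nashG2 t s (-(2 / u)) = 0) ∧
      (nashG1 t (-s) (2 * I / u) = 0 ∧ nashG2 t (-s) (2 * I / u) = 0) ∧
      (nashG1 t (-s) (-(2 * I / u)) = 0 ∧ nashG2 t (-s) (-(2 * I / u)) = 0) := by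
  intro t s u ht hs hu
  have hu0 : u ≠ 0 := by
    rintro rfl
    apply ht
    rw [← hs, ← hu]; ring
  subst hs hu
  have hI : I ^ 2 = -1 := Complex.I_sq
  refine ⟨⟨?_, ?_⟩, ⟨?_, ?_⟩, ⟨?_, ?_⟩, ⟨?_, ?_⟩⟩ <;>
    simp only [nashG1, nashG2] <;> field_simp <;> ring_nf <;>
    try (simp only [show I ^ 2 = -1 from hI, show I ^ 3 = -I by rw [pow_succ, hI]; ring,
      show I ^ 4 = 1 by rw [show (4:ℕ) = 2*2 from rfl, pow_mul, hI]; ring]; ring)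
end

section
/- Let S = A[s₀,...,s_r] be the graded polynomial ring over a commutative ring A, and let E(−w−r−1) denote the degree-graded A-module whose degree-d part is the A-span of monomials s₀^{−β₀}···s_r^{−β_r} with all β_i ≥ 1 and −Σβ_i = d − w − r − 1 (i.e. the top local cohomology / Čech cohomology module Ȟ^r(S(−w−r−1))). Then the pairing sending (s^α, s^{−β}) to 1 if α_i = β_i − 1 for all i and 0 otherwise induces an isomorphism of graded S-modules E(−w−r−1) ≅ Hom_A(S(w), A), where the S-module structure on the right is the contragredient one. -/
open MvPolynomial

/-!
`S = A[s₀, …, s_r]` is modeled as `MvPolynomial (Fin (r+1)) A`.  The module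
`E(-w-r-1) = Ȟ^r(S(-w-r-1))` is spanned over `A` by the Laurent monomials
`s₀^(-β₀-1) ⋯ s_r^(-β_r-1)` with `β : Fin (r+1) →₀ ℕ`; we model it as
`(Fin (r+1) →₀ ℕ) →₀ A`, the exponent vector `β` standing for `s^(-(β+1))`.
-/

/-- The model for `E(-w-r-1)`: finitely supported `A`-combinations of Laurent monomials
`s^(-(β+1))`, indexed by their exponent vectors `β`. -/
abbrev LaurentE (A : Type*) [CommRing A] (r : ℕ) : Type _ := (Fin (r + 1) →₀ ℕ) →₀ A

open Classical in
/-- The contragredient action of the monomial `s^γ` on `E`: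
`s^γ · s^(-(β+1)) = s^(-(β-γ+1))` when `γ ≤ β` componentwise, and `0` otherwise
(i.e. when some exponent would become nonnegative). -/
noncomputable def eSMul {A : Type*} [CommRing A] {r : ℕ} (γ : Fin (r + 1) →₀ ℕ)
    (e : LaurentE A r) : LaurentE A r :=
  e.sum fun β a => if ∀ i, γ i ≤ β i then Finsupp.single (β - γ) a else 0

/-- The monomial pairing `E(-w-r-1) → Hom_A(S(w), A)`, sending `s^(-(β+1))` to the
functional `⟨s^α ↦ (1 if α = β else 0)⟩` (in the paper's indexing, `(s^α, s^(-β'))` pairs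
to `1` iff `α_i = β'_i - 1` for all `i`). -/
noncomputable def lauPairing (A : Type*) [CommRing A] (r : ℕ) :
    LaurentE A r →ₗ[A] Module.Dual A (MvPolynomial (Fin (r + 1)) A) :=
  Finsupp.lift (Module.Dual A (MvPolynomial (Fin (r + 1)) A)) A (Fin (r + 1) →₀ ℕ)
    fun β => MvPolynomial.lcoeff A β

lemma lauPairing_apply {A : Type*} [CommRing A] {r : ℕ} (e : LaurentE A r)
    (p : MvPolynomial (Fin (r + 1)) A) :
    lauPairing A r e p = e.sum fun β a => a * coeff β p := by
  simp [lauPairing, Finsupp.lift_apply, Finsupp.sum_apply', lcoeff_apply, smul_eq_mul]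

lemma lauPairing_mono {A : Type*} [CommRing A] {r : ℕ} (e : LaurentE A r)
    (α : Fin (r + 1) →₀ ℕ) :
    lauPairing A r e (monomial α 1) = e α := by
  rw [lauPairing_apply]
  simp [coeff_monomial, Finsupp.sum_ite_eq', Finsupp.notMem_support_iff]


/-- The monomial pairing `(s^α, s^(-β')) ↦ (1 if α = β' - 1 else 0)`
induces an isomorphism of graded `S`-modules `E(-w-r-1) ≅ Hom_A(S(w), A)` (with the
contragredient `S`-module structure on the right): the induced `A`-linear map is
injective, intertwines the `S`-actions, is graded (an element of degree `d` of
`E(-w-r-1)` pairs to zero with any monomial whose degree in `S(w)` is not `-d`), and is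
surjective onto functionals in each degree. -/
theorem laurent_dual_pairing_iso
    (A : Type*) [CommRing A] (r : ℕ) (w : ℤ) :
    -- the pairing on monomials
    (∀ α β : Fin (r + 1) →₀ ℕ,
        lauPairing A r (Finsupp.single β (1 : A)) (monomial α (1 : A))
          = if α = β then 1 else 0) ∧
    -- injectivity
    Function.Injective (lauPairing A r) ∧
    -- compatibility with the `S`-module structures: `⟨s^γ • e, p⟩ = ⟨e, s^γ · p⟩`
    (∀ (γ : Fin (r + 1) →₀ ℕ) (e : LaurentE A r) (p : MvPolynomial (Fin (r + 1)) A),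
        lauPairing A r (eSMul γ e) p = lauPairing A r e (monomial γ 1 * p)) ∧
    -- gradedness: `s^(-(β+1))` has degree `d` in `E(-w-r-1)` exactly when
    -- `-∑ (βᵢ + 1) = d - w - (r+1)`, and then it annihilates every monomial of `S(w)`
    -- whose degree is not `-d`, i.e. whose total degree is not `w - d`
    (∀ (β : Fin (r + 1) →₀ ℕ) (a : A) (α : Fin (r + 1) →₀ ℕ) (c : A) (d : ℤ),
        -(∑ i, ((β i : ℤ) + 1)) = d - w - (r + 1) →
        (∑ i, (α i : ℤ)) ≠ w - d →
        lauPairing A r (Finsupp.single β a) (monomial α c) = 0) ∧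
    -- degreewise surjectivity onto `Hom_A(S(w), A)`
    (∀ (k : ℕ) (φ : Module.Dual A (MvPolynomial (Fin (r + 1)) A)),
        ∃ e : LaurentE A r,
          (∀ β ∈ e.support, ∑ i, β i = k) ∧
          ∀ α : Fin (r + 1) →₀ ℕ, (∑ i, α i = k) →
            lauPairing A r e (monomial α 1) = φ (monomial α 1)) := by
  refine ⟨?_, ?_, ?_, ?_, ?_⟩
  · intro α β
    rw [lauPairing_mono]
    simp [Finsupp.single_apply, eq_comm]
  · intro e e' h
    ext α
    have := congrArg (fun f => f (monomial α (1 : A))) h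
    simpa [lauPairing_mono] using this
  · intro γ e p
    rw [lauPairing_apply, lauPairing_apply, eSMul, Finsupp.sum_sum_index]
    · refine Finsupp.sum_congr fun β _ => ?_
      by_cases h : ∀ i, γ i ≤ β i
      · rw [if_pos h, Finsupp.sum_single_index (by simp), coeff_monomial_mul',
          if_pos (Finsupp.le_def.mpr h)]
        ring
      · rw [if_neg h, coeff_monomial_mul', if_neg (fun hle => h (Finsupp.le_def.mp hle)), mul_zero]
        simp [Finsupp.sum]
    · intro b; simp
    · intro b a₁ a₂; simp [add_mul]
  · intro β a α c d hβ hα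
    have hsum : (∑ i, ((β i : ℤ) + 1)) = (∑ i, (β i : ℤ)) + (r + 1) := by
      rw [Finset.sum_add_distrib]; simp
    have hne : α ≠ β := by
      rintro rfl
      refine hα ?_
      linarith
    rw [lauPairing_apply, Finsupp.sum_single_index (by simp), coeff_monomial,
      if_neg hne, mul_zero]
  · intro k φ
    classical
    set T : Finset (Fin (r + 1) →₀ ℕ) :=
      (((Finset.univ : Finset (Fin (r + 1) → Fin (k + 1))).image
        (fun f => Finsupp.equivFunOnFinite.symm fun i => ((f i : ℕ)))).filter
        (fun β => ∑ i, β i = k)) with hT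
    have hTk : ∀ β ∈ T, ∑ i, β i = k := by
      intro β hβ
      rw [hT, Finset.mem_filter] at hβ
      exact hβ.2
    refine ⟨∑ β ∈ T, Finsupp.single β (φ (monomial β 1)), ?_, ?_⟩
    · intro β hβ
      have h1 := Finsupp.support_finset_sum hβ
      rw [Finset.mem_biUnion] at h1
      obtain ⟨b, hb, hβb⟩ := h1
      have : β = b := by
        have := Finsupp.support_single_subset hβb
        simpa using this
      exact this ▸ hTk b hb
    · intro α hα
      rw [lauPairing_mono]
      have hmem : α ∈ T := by
        rw [hT, Finset.mem_filter, Finset.mem_image]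
        refine ⟨⟨fun i => ⟨α i, ?_⟩, Finset.mem_univ _, ?_⟩, hα⟩
        · have : α i ≤ ∑ j, α j :=
            Finset.single_le_sum (fun j _ => Nat.zero_le _) (Finset.mem_univ i)
          omega
        · apply Finsupp.equivFunOnFinite.symm_apply_eq.mpr
          rfl
      rw [Finset.sum_apply']
      rw [Finset.sum_eq_single α]
      · simp
      · intro b _ hb; simp [Finsupp.single_apply, hb]
      · intro h; exact absurd hmem h
end

section
/- Let A be a commutative ring, S = A[s₀,...,s_r] graded, π : ℙ^r_A → Spec A the projection, and w ∈ ℤ. If d ≥ max(w − r, 1), then the degree-zero part of S(d(r+1)−w)/⟨s₀^d,...,s_r^d⟩ is a free A-module isomorphic to H^r(ℙ^r_A, O(−w)); in particular H^r(ℙ^r_A, O(−w)) is free of rank binom(w−1, r) when w ≥ r+1 and zero when w ≤ r. -/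
open MvPolynomial

/-- The concrete model of `H^r(ℙ^r_A, O(-w))`: the free `A`-module on the Laurent
monomials `s₀^(-β₀)⋯s_r^(-β_r)` with all `βᵢ ≥ 1` and `Σ βᵢ = w`; an exponent vector is
encoded as `β' = β - 1 : Fin (r+1) →₀ ℕ`, so the defining condition reads
`Σ (β'ᵢ + 1) = w`. -/
abbrev TopCohomology (A : Type*) [CommRing A] (r : ℕ) (w : ℤ) : Type _ :=
  {β : Fin (r + 1) →₀ ℕ // (∑ i, ((β i : ℤ) + 1)) = w} →₀ A

/-- The degree-zero part of `S(d(r+1)-w)/⟨s₀^d, …, s_r^d⟩`: the `A`-span of the classes of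
the monomials of total degree `d(r+1) - w`. -/
noncomputable def degreeZeroPart (A : Type*) [CommRing A] (r : ℕ) (w : ℤ) (d : ℕ) :
    Submodule A (MvPolynomial (Fin (r + 1)) A ⧸
      Ideal.span (Set.range fun i : Fin (r + 1) => (X i : MvPolynomial (Fin (r + 1)) A) ^ d)) :=
  Submodule.span A
    ((fun α : Fin (r + 1) →₀ ℕ =>
        Ideal.Quotient.mk
          (Ideal.span (Set.range fun i : Fin (r + 1) => (X i : MvPolynomial (Fin (r + 1)) A) ^ d))
          (monomial α 1)) ''
      {α | (∑ i, (α i : ℤ)) = d * (r + 1) - w})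

/-!
The ideal `⟨s₀^d, …, s_r^d⟩` is the `A`-span of the monomials `s^α` with some `αᵢ ≥ d`, so the
quotient is free on the classes of the monomials with all `αᵢ < d`, and the degree-zero part is
free on those of total degree `d(r+1) - w`. Sending such an `α` to `β = d - α` matches them with
the Laurent monomials `s^(-β)`, `βᵢ ≥ 1`, `Σ βᵢ = w`: the bound `d ≥ w - r` is what makes every
such `β` satisfy `βᵢ ≤ d`. Finally the `β - 1` are the monomials of degree `w - r - 1` in `r + 1`
variables, of which there are `binom(w - 1, r)`.
-/

namespace MvPolynomial

variable {σ R : Type*} [CommRing R]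

local notation "𝔞" d:max => Ideal.span (Set.range fun i => (X i : MvPolynomial σ R) ^ d)

lemma mem_span_range_X_pow_iff {d : ℕ} {p : MvPolynomial σ R} :
    p ∈ 𝔞 d ↔ p ∈ restrictSupport R {α | ∃ i, d ≤ α i} := by
  have hgen : (Set.range fun i => (X i : MvPolynomial σ R) ^ d) =
      (fun α => monomial α (1 : R)) '' Set.range fun i => Finsupp.single i d := by
    rw [← Set.range_comp]
    simp only [Function.comp_def, X_pow_eq_monomial]
  simp only [hgen, mem_ideal_span_monomial_image, mem_restrictSupport_iff, Set.exists_range_iff,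
    Finsupp.single_le_iff, Set.subset_def, Finset.mem_coe, Set.mem_ofPred_eq]

variable (R) in
lemma linearIndependent_mk_monomial {d : ℕ} {s : Set (σ →₀ ℕ)} (hs : ∀ α ∈ s, ∀ i, α i < d) :
    LinearIndependent R fun α : s => Ideal.Quotient.mk (𝔞 d) (monomial α.1 1) := by
  have hmon : LinearIndependent R fun α : s => monomial α.1 (1 : R) :=
    (basisMonomials σ R).linearIndependent.comp _ Subtype.val_injective
  have hspan : Submodule.span R (Set.range fun α : s => monomial α.1 (1 : R)) =
      restrictSupport R s := by
    rw [restrictSupport_eq_span, Set.image_eq_range]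
  refine hmon.map (f := (Ideal.Quotient.mkₐ R (𝔞 d)).toLinearMap) ?_
  rw [hspan, Submodule.disjoint_def]
  intro p hps hpI
  have hpU : p ∈ restrictSupport R {α | ∃ i, d ≤ α i} :=
    mem_span_range_X_pow_iff.mp (Ideal.Quotient.eq_zero_iff_mem.mp hpI)
  rw [mem_restrictSupport_iff] at hps hpU
  rw [← support_eq_empty, Finset.eq_empty_iff_forall_notMem]
  intro α hα
  obtain ⟨i, hi⟩ := hpU hα
  exact (hs α (hps hα) i).not_ge hi

lemma span_mk_monomial_image_eq (d : ℕ) (t : Set (σ →₀ ℕ)) :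
    Submodule.span R ((fun α => Ideal.Quotient.mk (𝔞 d) (monomial α 1)) '' t) =
      Submodule.span R (Set.range fun α : ↥(t ∩ {α | ∀ i, α i < d}) =>
        Ideal.Quotient.mk (𝔞 d) (monomial α.1 1)) := by
  refine le_antisymm (Submodule.span_le.mpr ?_) (Submodule.span_mono ?_)
  · rintro _ ⟨α, hαt, rfl⟩
    by_cases hα : ∀ i, α i < d
    · exact Submodule.subset_span ⟨⟨α, hαt, hα⟩, rfl⟩
    · push Not at hα
      have hzero : Ideal.Quotient.mk (𝔞 d) (monomial α (1 : R)) = 0 :=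
        Ideal.Quotient.eq_zero_iff_mem.mpr
          (mem_span_range_X_pow_iff.mpr ((monomial_mem_restrictSupport R).mpr (.inl hα)))
      simpa only [SetLike.mem_coe, hzero] using Submodule.zero_mem _
  · rintro _ ⟨α, rfl⟩
    exact ⟨α.1, α.2.1, rfl⟩

variable (R) in
noncomputable def basisSpanMkMonomial (d : ℕ) (t : Set (σ →₀ ℕ)) :
    Module.Basis ↥(t ∩ {α | ∀ i, α i < d}) R
      (Submodule.span R ((fun α => Ideal.Quotient.mk (𝔞 d) (monomial α 1)) '' t)) :=
  (Module.Basis.span (linearIndependent_mk_monomial R fun _ hα => hα.2)).map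
    (LinearEquiv.ofEq _ _ (span_mk_monomial_image_eq d t).symm)

end MvPolynomial

namespace Finsupp

variable {σ : Type*} [Fintype σ]

lemma sum_natCast_add_one (β : σ →₀ ℕ) :
    ∑ i, ((β i : ℤ) + 1) = ∑ i, (β i : ℤ) + Fintype.card σ := by
  simp [Finset.sum_add_distrib]

lemma apply_add_card_le_sum_natCast_add_one (β : σ →₀ ℕ) (j : σ) :
    (β j : ℤ) + Fintype.card σ ≤ ∑ i, ((β i : ℤ) + 1) := by
  rw [sum_natCast_add_one]
  gcongr
  exact Finset.single_le_sum (fun i _ => Int.natCast_nonneg (β i)) (Finset.mem_univ j)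

lemma apply_lt_of_sum_natCast_add_one_eq {β : σ →₀ ℕ} {d : ℕ} {w : ℤ}
    (hβ : ∑ i, ((β i : ℤ) + 1) = w) (hw : w < d + Fintype.card σ) (i : σ) : β i < d := by
  have := apply_add_card_le_sum_natCast_add_one β i
  omega

lemma isEmpty_sum_natCast_add_one_eq {w : ℤ} (hw : w < Fintype.card σ) :
    IsEmpty {β : σ →₀ ℕ // ∑ i, ((β i : ℤ) + 1) = w} := by
  refine ⟨fun ⟨β, hβ⟩ => ?_⟩
  have : (0 : ℤ) ≤ ∑ i, (β i : ℤ) := Finset.sum_nonneg fun i _ => Int.natCast_nonneg (β i)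
  rw [sum_natCast_add_one] at hβ
  omega

lemma natCard_sum_natCast_add_one_eq {w : ℤ} (hw : Fintype.card σ ≤ w) :
    Nat.card {β : σ →₀ ℕ // ∑ i, ((β i : ℤ) + 1) = w} =
      (Fintype.card σ).multichoose (w - Fintype.card σ).toNat := by
  classical
  have e : {β : σ →₀ ℕ // ∑ i, ((β i : ℤ) + 1) = w} ≃
      (Finset.univ : Finset σ).finsuppAntidiag (w - Fintype.card σ).toNat := by
    refine Equiv.subtypeEquivRight fun β => ?_
    rw [Finset.mem_finsuppAntidiag, sum_natCast_add_one]
    simp only [Finset.subset_univ, and_true, ← Nat.cast_sum]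
    change _ ↔ ∑ i, β i = _
    omega
  rw [Nat.card_congr e, Nat.card_eq_finsetCard, Finset.card_finsuppAntidiag_nat_eq_multichoose,
    Finset.card_univ]

noncomputable def complementExponent (d : ℕ) (α : σ →₀ ℕ) : σ →₀ ℕ :=
  equivFunOnFinite.symm fun i => d - 1 - α i

@[simp]
lemma complementExponent_apply (d : ℕ) (α : σ →₀ ℕ) (i : σ) :
    complementExponent d α i = d - 1 - α i := rfl

lemma complementExponent_lt {d : ℕ} {α : σ →₀ ℕ} (h : ∀ i, α i < d) (i : σ) :
    complementExponent d α i < d := by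
  have := h i
  simp only [complementExponent_apply]
  omega

lemma complementExponent_complementExponent {d : ℕ} {α : σ →₀ ℕ} (h : ∀ i, α i < d) :
    complementExponent d (complementExponent d α) = α := by
  ext i
  have := h i
  simp only [complementExponent_apply]
  omega

lemma sum_complementExponent {d : ℕ} {α : σ →₀ ℕ} (h : ∀ i, α i < d) :
    ∑ i, ((complementExponent d α i : ℤ) + 1) = d * Fintype.card σ - ∑ i, (α i : ℤ) := by
  have hterm : ∀ i, ((complementExponent d α i : ℤ) + 1) = d - α i := by
    intro i
    have := h i
    simp only [complementExponent_apply]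
    omega
  simp only [hterm, Finset.sum_sub_distrib, Finset.sum_const, Finset.card_univ, nsmul_eq_mul,
    mul_comm]

noncomputable def complementExponentEquiv (d : ℕ) {N w : ℤ}
    (hN : N + w = d * Fintype.card σ) (hw : w < d + Fintype.card σ) :
    ↥({α : σ →₀ ℕ | ∑ i, (α i : ℤ) = N} ∩ {α | ∀ i, α i < d}) ≃
      {β : σ →₀ ℕ // ∑ i, ((β i : ℤ) + 1) = w} where
  toFun α := ⟨complementExponent d α, by rw [sum_complementExponent α.2.2, α.2.1]; linarith⟩
  invFun β :=
    have hβ := apply_lt_of_sum_natCast_add_one_eq β.2 hw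
    ⟨complementExponent d β, by
      have := sum_complementExponent (complementExponent_lt hβ)
      rw [complementExponent_complementExponent hβ, β.2] at this
      simp only [Set.mem_ofPred_eq]
      linarith, complementExponent_lt hβ⟩
  left_inv α := Subtype.ext (complementExponent_complementExponent α.2.2)
  right_inv β :=
    Subtype.ext (complementExponent_complementExponent (apply_lt_of_sum_natCast_add_one_eq β.2 hw))

end Finsupp

lemma natCard_sum_natCast_add_one_eq_choose {r : ℕ} {w : ℤ} (hw : (r : ℤ) + 1 ≤ w) :
    Nat.card {β : Fin (r + 1) →₀ ℕ // ∑ i, ((β i : ℤ) + 1) = w} = (w - 1).toNat.choose r := by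
  have hm : (w - 1).toNat = r + (w - (r + 1 : ℕ)).toNat := by omega
  rw [Finsupp.natCard_sum_natCast_add_one_eq (by simpa using hw), Fintype.card_fin,
    Nat.multichoose_eq, hm, Nat.choose_symm_add, Nat.add_right_comm, Nat.add_sub_cancel]

/-- For `d ≥ max(w - r, 1)`, the degree-zero part of
`S(d(r+1)-w)/⟨s₀^d, …, s_r^d⟩` is a free `A`-module isomorphic to `H^r(ℙ^r_A, O(-w))`;
in particular `H^r(ℙ^r_A, O(-w))` is free of rank `binom(w-1, r)` when `w ≥ r + 1` and
zero when `w ≤ r`. -/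
theorem degree_zero_part_iso_top_cohomology
    (A : Type*) [CommRing A] (r : ℕ) (w : ℤ) (d : ℕ)
    (hd : max (w - r) 1 ≤ (d : ℤ)) :
    Module.Free A (degreeZeroPart A r w d) ∧
    Nonempty ((degreeZeroPart A r w d) ≃ₗ[A] TopCohomology A r w) ∧
    ((r : ℤ) + 1 ≤ w →
      Nonempty (TopCohomology A r w ≃ₗ[A] (Fin ((w - 1).toNat.choose r) → A))) ∧
    (w ≤ r → Subsingleton (TopCohomology A r w)) := by
  have hcard : (Fintype.card (Fin (r + 1)) : ℤ) = r + 1 := by simp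
  let b : Module.Basis _ A (degreeZeroPart A r w d) := basisSpanMkMonomial A d _
  let e := Finsupp.complementExponentEquiv (σ := Fin (r + 1)) d (N := d * (r + 1) - w) (w := w)
    (by rw [hcard]; ring) (by rw [hcard]; linarith [le_max_left (w - r) 1])
  refine ⟨.of_basis b, ⟨b.repr ≪≫ₗ Finsupp.domLCongr e⟩, fun hw => ?_, fun hw => ?_⟩
  · have hn := natCard_sum_natCast_add_one_eq_choose hw
    have : Finite {β : Fin (r + 1) →₀ ℕ // ∑ i, ((β i : ℤ) + 1) = w} :=
      Nat.finite_of_card_ne_zero (hn ▸ (Nat.choose_pos (by omega)).ne')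
    exact ⟨Finsupp.domLCongr (Finite.equivFin _ |>.trans (finCongr hn)) ≪≫ₗ
      Finsupp.linearEquivFunOnFinite A A _⟩
  · have := Finsupp.isEmpty_sum_natCast_add_one_eq (σ := Fin (r + 1)) (w := w) (by rw [hcard]; omega)
    infer_instance
end
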